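/- arXiv:2506.05586 — 3 statements merged into one kernel-verified Lean document; each statement's English description precedes it below -/
import Mathlib

section
/- The partial derivative of the continuant K_k(a_1,...,a_k) (viewed as a polynomial in its k variables) with respect to a_l equals K_{l-1}(a_1,...,a_{l-1}) · K_{k-l}(a_{l+1},...,a_k). -/
/-- Continuant polynomial: K [] = 1, K [a] = a,
K (a :: b :: l) = a * K (b :: l) + K l. -/
def cont {R : Type*} [CommRing R] : List R → R
  | [] => 1
  | [a] => a
  | a :: b :: l => a * cont (b :: l) + cont l

/-!
By the Leibniz rule, a derivation `D` with `D a = 0` satisfies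
`D (cont (a :: b :: l)) = a • D (cont (b :: l)) + D (cont l)`: the derivative obeys the continuant
recursion itself. So if `D` kills every entry of `l₁ ++ x :: l₂` except `x`, peeling `l₁` off the
front leaves the factor `cont l₁`, while at `x` the derivative is `cont l₂ • D x`. The partial
derivative in `a_l` is such a derivation, with `D a_l = 1`.
-/

theorem List.ofFn_eq_append_cons {α : Type*} {k n : ℕ} (f : Fin k → α) (hn : n < k) :
    List.ofFn f = (List.ofFn fun i : Fin n => f ⟨i, by omega⟩) ++
      f ⟨n, hn⟩ :: List.ofFn fun i : Fin (k - n - 1) => f ⟨n + 1 + i, by omega⟩ := by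
  rw [List.ofFn_congr (show k = n + (1 + (k - n - 1)) by omega), List.ofFn_add, List.ofFn_add,
    List.ofFn_succ]
  congr! 3
  funext i
  congr 1
  ext
  simp only [Fin.val_cast, Fin.val_natAdd]
  omega

section Derivation

variable {R A M : Type*} [CommSemiring R] [CommRing A] [Algebra R A] [AddCommMonoid M]
  [Module A M] [Module R M] (D : Derivation R A M)

theorem Derivation.map_cont_eq_zero {l : List A} (hl : ∀ a ∈ l, D a = 0) : D (cont l) = 0 := by
  induction l using cont.induct with
  | case1 => simp [cont]
  | case2 a => simpa [cont] using hl
  | case3 a b l ih₁ ih₂ =>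
    simp only [List.mem_cons, forall_eq_or_imp] at hl ih₁ ih₂
    simp [cont, Derivation.leibniz, hl.1, ih₁ hl.2, ih₂ hl.2.2]

theorem Derivation.map_cont_cons (x : A) {l : List A} (hl : ∀ a ∈ l, D a = 0) :
    D (cont (x :: l)) = cont l • D x := by
  cases l with
  | nil => simp [cont]
  | cons b t =>
    simp only [List.mem_cons, forall_eq_or_imp] at hl
    have hbt : D (cont (b :: t)) = 0 := D.map_cont_eq_zero (by simpa using hl)
    simp [cont, Derivation.leibniz, hbt, D.map_cont_eq_zero hl.2]

theorem Derivation.map_cont_append_cons (x : A) {l₁ l₂ : List A} (h₁ : ∀ a ∈ l₁, D a = 0)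
    (h₂ : ∀ a ∈ l₂, D a = 0) : D (cont (l₁ ++ x :: l₂)) = (cont l₁ * cont l₂) • D x := by
  induction l₁ using cont.induct with
  | case1 => simp [cont, D.map_cont_cons x h₂]
  | case2 a =>
    simp only [List.mem_singleton, forall_eq] at h₁
    simp [cont, Derivation.leibniz, D.map_cont_cons x h₂, D.map_cont_eq_zero h₂, h₁, smul_smul]
  | case3 a b t ih₁ ih₂ =>
    simp only [List.mem_cons, forall_eq_or_imp] at h₁ ih₁ ih₂
    simp only [List.cons_append, cont] at ih₁ ih₂ ⊢
    rw [map_add, Derivation.leibniz, ih₁ h₁.2, ih₂ h₁.2.2, h₁.1, smul_zero, add_zero, smul_smul,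
      ← add_smul, add_mul, mul_assoc]

end Derivation

open MvPolynomial in
/-- The partial derivative of the continuant polynomial K_k(a_1,...,a_k)
with respect to a_l equals K_{l-1}(a_1,...,a_{l-1}) · K_{k-l}(a_{l+1},...,a_k).
Here variables are 0-indexed: `X l` is a_{l+1}. -/
theorem pderiv_continuant (k : ℕ) (l : Fin k) :
    pderiv l (cont (List.ofFn fun i : Fin k => (X i : MvPolynomial (Fin k) ℝ))) =
      cont (List.ofFn fun i : Fin (l : ℕ) =>
          (X ⟨(i : ℕ), by omega⟩ : MvPolynomial (Fin k) ℝ)) *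
        cont (List.ofFn fun i : Fin (k - (l : ℕ) - 1) =>
          (X ⟨(l : ℕ) + 1 + (i : ℕ), by omega⟩ : MvPolynomial (Fin k) ℝ)) := by
  rw [List.ofFn_eq_append_cons _ l.isLt, (pderiv (R := ℝ) l).map_cont_append_cons, pderiv_X_self,
    smul_eq_mul, mul_one]
  all_goals
    simp only [List.mem_ofFn, forall_exists_index, forall_apply_eq_imp_iff]
    exact fun i => pderiv_X_of_ne (by simp [Fin.ext_iff]; omega)
end

section
/- For the continued fraction value f(a_0,...,a_d) = K_{d+1}(a_0,...,a_d)/K_d(a_1,...,a_d), the partial derivative with respect to a_k satisfies ∂f/∂a_k = (−1)^k · (K_{d−k}(a_{k+1},...,a_d)/K_d(a_1,...,a_d))², at any point where K_d(a_1,...,a_d) ≠ 0. -/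
theorem List.ofFn_update {α : Type*} {n : ℕ} (f : Fin n → α) (i : Fin n) (x : α) :
    List.ofFn (Function.update f i x) = (List.ofFn f).set i x := by
  apply List.ext_getElem (by simp)
  intro j h₁ h₂
  simp [List.getElem_set, Function.update_apply, Fin.ext_iff, eq_comm]

theorem List.drop_ofFn_eq_ofFn {α : Type*} {n m p : ℕ} (f : Fin n → α) (h : m + p = n) :
    (List.ofFn f).drop m = List.ofFn fun i : Fin p => f ⟨m + i, by omega⟩ := by
  apply List.ext_getElem (by simp only [List.length_drop, List.length_ofFn]; omega)
  intro j h₁ h₂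
  simp

section Continuant

variable {R : Type*} [CommRing R]

/-- `K` of the tail of a list, with `K_{-1} = 0` for the empty list. -/
def contTail : List R → R
  | [] => 0
  | _ :: l => cont l

theorem cont_cons (a : R) (l : List R) : cont (a :: l) = a * cont l + contTail l := by
  cases l <;> simp [cont, contTail]

theorem contTail_ofFn {n : ℕ} (f : Fin (n + 1) → R) :
    contTail (List.ofFn f) = cont (List.ofFn fun i : Fin n => f i.succ) := by
  rw [List.ofFn_succ]
  rfl

def contMatrix (a : R) : Matrix (Fin 2) (Fin 2) R := !![a, 1; 1, 0]

def contProd (l : List R) : Matrix (Fin 2) (Fin 2) R := (l.map contMatrix).prod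

@[simp]
theorem contProd_nil : contProd ([] : List R) = 1 := rfl

theorem contProd_cons (a : R) (l : List R) : contProd (a :: l) = contMatrix a * contProd l :=
  List.prod_cons

theorem contProd_append_cons (P S : List R) (t : R) :
    contProd (P ++ t :: S) = contProd P * contMatrix t * contProd S := by
  simp [contProd, List.prod_append, mul_assoc]

theorem contProd_apply_zero_zero_and_one_zero (l : List R) :
    contProd l 0 0 = cont l ∧ contProd l 1 0 = contTail l := by
  induction l with
  | nil => simp [cont, contTail]
  | cons a l ih =>
    simp [contProd_cons, Matrix.mul_apply, contMatrix, ih.1, ih.2, cont_cons, contTail]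

theorem contProd_apply_zero_zero (l : List R) : contProd l 0 0 = cont l :=
  (contProd_apply_zero_zero_and_one_zero l).1

theorem contProd_apply_one_zero (l : List R) : contProd l 1 0 = contTail l :=
  (contProd_apply_zero_zero_and_one_zero l).2

theorem det_contProd (l : List R) : (contProd l).det = (-1) ^ l.length := by
  induction l with
  | nil => simp
  | cons a l ih =>
    rw [contProd_cons, Matrix.det_mul, ih]
    simp [contMatrix, Matrix.det_fin_two_of, pow_succ]

theorem mul_contMatrix_mul_apply_zero (U V : Matrix (Fin 2) (Fin 2) R) (t : R) (i : Fin 2) :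
    (U * contMatrix t * V) i 0 = U i 0 * V 0 0 * t + (U i 0 * V 1 0 + U i 1 * V 0 0) := by
  simp only [contMatrix, Matrix.mul_apply, Matrix.of_apply, Matrix.cons_val', Matrix.cons_val_fin_one,
    Fin.sum_univ_two, Matrix.cons_val_zero, Matrix.cons_val_one, mul_one, mul_zero, add_zero]
  ring

end Continuant

section Derivative

variable {𝕜 : Type*} [NontriviallyNormedField 𝕜]

theorem hasDerivAt_affine_div_affine {α β γ δ x : 𝕜} (h : γ * x + δ ≠ 0) :
    HasDerivAt (fun t => (α * t + β) / (γ * t + δ)) ((α * δ - β * γ) / (γ * x + δ) ^ 2) x := by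
  have hnum : HasDerivAt (fun t => α * t + β) α x := by
    simpa using ((hasDerivAt_id x).const_mul α).add_const β
  have hden : HasDerivAt (fun t => γ * t + δ) γ x := by
    simpa using ((hasDerivAt_id x).const_mul γ).add_const δ
  exact (hnum.div hden h).congr_deriv (by ring)

theorem hasDerivAt_cont_div_contTail (P S : List 𝕜) {x : 𝕜} (h : contTail (P ++ x :: S) ≠ 0) :
    HasDerivAt (fun t => cont (P ++ t :: S) / contTail (P ++ t :: S))
      ((-1) ^ P.length * (cont S / contTail (P ++ x :: S)) ^ 2) x := by
  set U := contProd P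
  set V := contProd S
  have hcont : ∀ t, cont (P ++ t :: S) = U 0 0 * V 0 0 * t + (U 0 0 * V 1 0 + U 0 1 * V 0 0) :=
    fun t => by
      rw [← contProd_apply_zero_zero, contProd_append_cons, mul_contMatrix_mul_apply_zero]
  have hcontTail : ∀ t,
      contTail (P ++ t :: S) = U 1 0 * V 0 0 * t + (U 1 0 * V 1 0 + U 1 1 * V 0 0) :=
    fun t => by
      rw [← contProd_apply_one_zero, contProd_append_cons, mul_contMatrix_mul_apply_zero]
  have hdet : U 0 0 * U 1 1 - U 0 1 * U 1 0 = (-1) ^ P.length := by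
    rw [← Matrix.det_fin_two, det_contProd]
  simp only [hcont, hcontTail] at h ⊢
  rw [← contProd_apply_zero_zero S, ← hdet]
  convert hasDerivAt_affine_div_affine h using 1
  field_simp
  ring

end Derivative

/-- For f(a_0,...,a_d) = K_{d+1}(a_0,...,a_d)/K_d(a_1,...,a_d), the partial
derivative with respect to a_k is
(−1)^k · (K_{d−k}(a_{k+1},...,a_d)/K_d(a_1,...,a_d))², at any point where
K_d(a_1,...,a_d) ≠ 0. -/
theorem hasDerivAt_continuant_ratio (d : ℕ) (k : Fin (d + 1)) (a : Fin (d + 1) → ℝ)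
    (h : cont (List.ofFn fun i : Fin d => a i.succ) ≠ 0) :
    HasDerivAt
      (fun t : ℝ =>
        cont (List.ofFn (Function.update a k t)) /
          cont (List.ofFn fun i : Fin d => Function.update a k t i.succ))
      ((-1) ^ (k : ℕ) *
        (cont (List.ofFn fun i : Fin (d - (k : ℕ)) => a ⟨(k : ℕ) + 1 + (i : ℕ), by omega⟩) /
            cont (List.ofFn fun i : Fin d => a i.succ)) ^ 2)
      (a k) := by
  set P := (List.ofFn a).take k
  set S := (List.ofFn a).drop (k + 1)
  have hsplit : ∀ t, List.ofFn (Function.update a k t) = P ++ t :: S := fun t => by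
    rw [List.ofFn_update, List.set_eq_take_append_cons_drop, if_pos (by simpa using k.isLt)]
  have hself : P ++ a k :: S = List.ofFn a := by
    rw [← hsplit, Function.update_eq_self]
  have hP : P.length = k := by simp [P]
  have hS : S = List.ofFn fun i : Fin (d - k) => a ⟨k + 1 + i, by omega⟩ :=
    List.drop_ofFn_eq_ofFn a (by omega)
  simp only [← contTail_ofFn, hsplit] at h ⊢
  rw [← hself] at h ⊢
  refine (hasDerivAt_cont_div_contTail P S h).congr_deriv ?_
  rw [hP, hS]
end

section
/- The set of finite linear combinations of finite-depth continued fractions with affine numerators and denominators (⋃_{L≥1} ⊕^L CFL), restricted to functions defined and continuous on [0,1]^p, is dense in C([0,1]^p, ℝ) in the supremum norm. -/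
/-- \`cflT N D d m\` is the tail t_{d-m} of the continued fraction with
numerators N k and extra denominator terms D k:
t_d = N d / (1 + D d), and t_k = N k / (1 + D k + t_{k+1}). -/
noncomputable def cflT (N D : ℕ → ℝ) (d : ℕ) : ℕ → ℝ
  | 0 => N d / (1 + D d)
  | m + 1 => N (d - (m + 1)) / (1 + D (d - (m + 1)) + cflT N D d m)

/-- Value of the continued fraction N 0 /(1 + N 1/(1 + D 1 + N 2/(1 + D 2 + ...)))
of depth d; depth 0 is just N 0. -/
noncomputable def cflVal (N D : ℕ → ℝ) : ℕ → ℝ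
  | 0 => N 0
  | d + 1 => N 0 / (1 + cflT N D (d + 1) d)

/-- Data of a member of the class CFL: a finite-depth continued fraction with
affine numerators v_kᵀx + α_k and denominators 1 + w_kᵀx + β_k. -/
structure CFLData (p : ℕ) where
  d : ℕ
  v : ℕ → Fin p → ℝ
  a : ℕ → ℝ
  w : ℕ → Fin p → ℝ
  b : ℕ → ℝ

/-- Numerators N_k(x) = v_kᵀx + α_k. -/
noncomputable def CFLData.N {p : ℕ} (F : CFLData p) (x : Fin p → ℝ) : ℕ → ℝ :=
  fun k => (∑ i, F.v k i * x i) + F.a k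

/-- Denominator terms D_k(x) = w_kᵀx + β_k. -/
noncomputable def CFLData.D {p : ℕ} (F : CFLData p) (x : Fin p → ℝ) : ℕ → ℝ :=
  fun k => (∑ i, F.w k i * x i) + F.b k

/-- The value at x of the CFL continued fraction. -/
noncomputable def CFLData.val {p : ℕ} (F : CFLData p) (x : Fin p → ℝ) : ℝ :=
  cflVal (F.N x) (F.D x) F.d

/-- All intermediate denominators of the continued fraction are nonzero at x. -/
def CFLData.DenomOK {p : ℕ} (F : CFLData p) (x : Fin p → ℝ) : Prop :=
  match F.d with
  | 0 => True
  | d + 1 =>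
      (1 + F.D x (d + 1) ≠ 0) ∧
      (∀ m < d, 1 + F.D x (d + 1 - (m + 1)) + cflT (F.N x) (F.D x) (d + 1) m ≠ 0) ∧
      (1 + cflT (F.N x) (F.D x) (d + 1) d ≠ 0)

/-- The unit cube [0,1]^p. -/
def Cube (p : ℕ) : Set (Fin p → ℝ) := Set.Icc 0 1

/-!
By Euler's continued fraction formula,
`1 / (1 - a₀ / (1 + a₀ - a₁ / (1 + a₁ - ⋯ - aₙ / (1 + aₙ)))) = 1 + a₀ + a₀a₁ + ⋯ + a₀⋯aₙ`,
and all its denominators are positive when the `aₖ` are nonnegative. Taking for the `aₖ`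
coordinate functions, padded by the constant `1`, the difference of the fractions of depths
`d + 1` and `d` is a monomial on `[0,1]^p`. Hence every polynomial is a linear combination of
CFL fractions, and the Stone–Weierstrass theorem concludes.
-/

open Finset

/-- The right-hand side `a₀ + a₀a₁ + ⋯ + a₀a₁⋯aₙ₋₁` of Euler's continued fraction formula. -/
noncomputable def eulerSum (a : ℕ → ℝ) (n : ℕ) : ℝ :=
  ∑ k ∈ range n, ∏ j ∈ range (k + 1), a j

lemma eulerSum_succ (a : ℕ → ℝ) (n : ℕ) :
    eulerSum a (n + 1) = a 0 * (1 + eulerSum (fun j => a (j + 1)) n) := by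
  simp only [eulerSum, sum_range_succ', prod_range_succ', mul_add, mul_sum]
  simp only [prod_range_zero, zero_add, one_mul, mul_comm (a 0)]
  ring

lemma eulerSum_nonneg {a : ℕ → ℝ} (ha : ∀ k, 0 ≤ a k) (n : ℕ) : 0 ≤ eulerSum a n :=
  sum_nonneg fun _ _ => prod_nonneg fun j _ => ha j

lemma eulerSum_succ_sub (a : ℕ → ℝ) (n : ℕ) :
    eulerSum a (n + 1) - eulerSum a n = ∏ j ∈ range (n + 1), a j := by
  rw [eulerSum, eulerSum, sum_range_succ, add_sub_cancel_left]

lemma one_add_add_neg_div_one_add {t S : ℝ} (hS : 0 ≤ S) :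
    1 + t + -S / (1 + S) = (1 + t * (1 + S)) / (1 + S) := by
  field_simp
  ring

lemma one_add_neg_div_one_add {S : ℝ} (hS : 0 ≤ S) : 1 + -S / (1 + S) = (1 + S)⁻¹ := by
  field_simp
  ring

section Euler

variable {N D : ℕ → ℝ}

/-- Euler's formula for the tail of the fraction that starts at `N (i + 1)`. -/
theorem cflT_eq_neg_eulerSum (hN : ∀ k, N (k + 1) = -D (k + 1)) (hD : ∀ k, 0 ≤ D (k + 1))
    {d : ℕ} (m : ℕ) :
    ∀ i, i + m + 1 = d → cflT N D d m =
      -eulerSum (fun j => D (i + j + 1)) (m + 1) /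
        (1 + eulerSum (fun j => D (i + j + 1)) (m + 1)) := by
  induction m with
  | zero =>
    rintro i rfl
    simp [cflT, eulerSum, hN]
  | succ m ih =>
    intro i hi
    have hS := eulerSum_nonneg (fun j => hD (i + 1 + j)) (m + 1)
    rw [cflT, show d - (m + 1) = i + 1 by omega, ih (i + 1) (by omega), hN,
      one_add_add_neg_div_one_add hS, eulerSum_succ (fun j => D (i + j + 1))]
    have hshift : (fun j => D (i + (j + 1) + 1)) = fun j => D (i + 1 + j + 1) := by
      funext j; ring_nf
    have hpos : 0 < 1 + D (i + 1) * (1 + eulerSum (fun j => D (i + 1 + j + 1)) (m + 1)) := by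
      have := hD i; positivity
    simp only [add_zero, hshift]
    field_simp

theorem cflVal_eq_eulerSum (hN : ∀ k, N (k + 1) = -D (k + 1)) (hD : ∀ k, 0 ≤ D (k + 1))
    (d : ℕ) : cflVal N D d = N 0 * (1 + eulerSum (fun j => D (j + 1)) d) := by
  cases d with
  | zero => simp [cflVal, eulerSum]
  | succ d =>
    have hS := eulerSum_nonneg (fun j => hD j) (d + 1)
    rw [cflVal, cflT_eq_neg_eulerSum hN hD d 0 (by rw [zero_add])]
    simp only [zero_add]
    rw [one_add_neg_div_one_add hS, div_inv_eq_mul]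

theorem cfl_denominators_pos (hN : ∀ k, N (k + 1) = -D (k + 1)) (hD : ∀ k, 0 ≤ D (k + 1))
    (d : ℕ) :
    0 < 1 + D (d + 1) ∧
      (∀ m < d, 0 < 1 + D (d + 1 - (m + 1)) + cflT N D (d + 1) m) ∧
      0 < 1 + cflT N D (d + 1) d := by
  have hS : ∀ i n, 0 ≤ eulerSum (fun j => D (i + j + 1)) n := fun i =>
    eulerSum_nonneg fun j => hD (i + j)
  refine ⟨by linarith [hD d], fun m hm => ?_, ?_⟩
  · obtain ⟨i, rfl⟩ : ∃ i, d = i + m + 1 := ⟨d - m - 1, by omega⟩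
    rw [cflT_eq_neg_eulerSum hN hD m (i + 1) (by omega),
      show i + m + 1 + 1 - (m + 1) = i + 1 by omega, one_add_add_neg_div_one_add (hS _ _)]
    have := hD i; have := hS (i + 1) (m + 1)
    positivity
  · rw [cflT_eq_neg_eulerSum hN hD d 0 (by omega), one_add_neg_div_one_add (hS _ _)]
    have := hS 0 (d + 1)
    positivity

end Euler

namespace CFLData

variable {p : ℕ}

/-- The continued fraction `1 / (1 - ℓ₀ / (1 + ℓ₀ - ℓ₁ / (1 + ℓ₁ - ⋯)))` of depth `d` in the affine
factors `ℓₖ x = ∑ i, u k i * x i + c k`. -/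
noncomputable def euler (d : ℕ) (u : ℕ → Fin p → ℝ) (c : ℕ → ℝ) : CFLData p where
  d := d
  v k := if k = 0 then 0 else -u (k - 1)
  a k := if k = 0 then 1 else -c (k - 1)
  w k := u (k - 1)
  b k := c (k - 1)

variable {d : ℕ} {u : ℕ → Fin p → ℝ} {c : ℕ → ℝ} {x : Fin p → ℝ}

lemma euler_N_succ (k : ℕ) : (euler d u c).N x (k + 1) = -(euler d u c).D x (k + 1) := by
  simp only [N, D, euler, Nat.add_one_ne_zero, if_false, Nat.add_sub_cancel, Pi.neg_apply]
  simp only [neg_mul, sum_neg_distrib]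
  ring

lemma euler_N_zero : (euler d u c).N x 0 = 1 := by
  simp [N, euler]

lemma denomOK_euler (hx : ∀ k, 0 ≤ ∑ i, u k i * x i + c k) : (euler d u c).DenomOK x := by
  cases d with
  | zero => trivial
  | succ d =>
    obtain ⟨h₁, h₂, h₃⟩ := cfl_denominators_pos euler_N_succ hx d
    exact ⟨h₁.ne', fun m hm => (h₂ m hm).ne', h₃.ne'⟩

lemma val_euler (hx : ∀ k, 0 ≤ ∑ i, u k i * x i + c k) :
    (euler d u c).val x = 1 + eulerSum (fun k => ∑ i, u k i * x i + c k) d := by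
  rw [val, cflVal_eq_eulerSum euler_N_succ hx, euler_N_zero, one_mul]
  rfl

end CFLData

/-- `⋃_L ⊕^L CFL`, keeping only the fractions whose denominators do not vanish on the cube. -/
def cflSpan (p : ℕ) : Submodule ℝ (Cube p → ℝ) :=
  Submodule.span ℝ {f | ∃ F : CFLData p, ∀ x : Cube p, F.DenomOK x ∧ f x = F.val x}

namespace cflSpan

variable {p : ℕ}

open CFLData

lemma exists_sum_eq {f : Cube p → ℝ} (hf : f ∈ cflSpan p) :
    ∃ (L : ℕ) (F : Fin L → CFLData p) (γ : Fin L → ℝ),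
      (∀ x : Cube p, ∀ i, (F i).DenomOK x) ∧ ∀ x : Cube p, f x = ∑ i, γ i * (F i).val x := by
  obtain ⟨L, γ, g, rfl⟩ := Submodule.mem_span_set'.1 hf
  choose F hF using fun i => (g i).2
  refine ⟨L, F, γ, fun x i => (hF i x).1, fun x => ?_⟩
  simp only [Finset.sum_apply, Pi.smul_apply, smul_eq_mul, (hF _ x).2]

/-- Euler's formula makes a product of nonnegative affine factors the difference of two
continued fractions of consecutive depths. -/
lemma prod_affine_mem (u : ℕ → Fin p → ℝ) (c : ℕ → ℝ)
    (hnn : ∀ x ∈ Cube p, ∀ k, 0 ≤ ∑ i, u k i * x i + c k) (d : ℕ) :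
    (fun x : Cube p => ∏ k ∈ range (d + 1), (∑ i, u k i * (x : Fin p → ℝ) i + c k)) ∈
      cflSpan p := by
  have hmem (n : ℕ) : (fun x : Cube p => (euler n u c).val x) ∈ cflSpan p :=
    Submodule.subset_span ⟨euler n u c, fun x => ⟨denomOK_euler (hnn x x.2), rfl⟩⟩
  convert sub_mem (hmem (d + 1)) (hmem d) using 1
  funext x
  simp only [Pi.sub_apply, val_euler (hnn x x.2), add_sub_add_left_eq_sub, eulerSum_succ_sub]

lemma prod_coord_mem {d : ℕ} (σ : Fin d → Fin p) :
    (fun x : Cube p => ∏ k, (x : Fin p → ℝ) (σ k)) ∈ cflSpan p := by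
  set u : ℕ → Fin p → ℝ := fun k => if h : k < d then Pi.single (σ ⟨k, h⟩) 1 else 0
  set c : ℕ → ℝ := fun k => if k < d then 0 else 1
  have hfactor (x : Fin p → ℝ) (k : ℕ) :
      ∑ i, u k i * x i + c k = if h : k < d then x (σ ⟨k, h⟩) else 1 := by
    by_cases h : k < d <;> simp [u, c, h, Pi.single_apply]
  have hnn (x) (hx : x ∈ Cube p) (k : ℕ) : 0 ≤ ∑ i, u k i * x i + c k := by
    rw [hfactor]
    split_ifs
    exacts [hx.1 _, zero_le_one]
  convert prod_affine_mem u c hnn d using 1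
  funext x
  simp [hfactor, prod_range_succ, ← Fin.prod_univ_eq_prod_range]

end cflSpan

namespace Cube

variable {p : ℕ}

instance : CompactSpace (Cube p) := isCompact_iff_compactSpace.mp isCompact_Icc

def coord (p : ℕ) (i : Fin p) : C(Cube p, ℝ) :=
  ⟨fun x => (x : Fin p → ℝ) i, (continuous_apply i).comp continuous_subtype_val⟩

lemma adjoin_coord_separatesPoints : (Algebra.adjoin ℝ (Set.range (coord p))).SeparatesPoints := by
  intro x y hxy
  obtain ⟨i, hi⟩ := Function.ne_iff.1 (Subtype.coe_ne_coe.2 hxy)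
  exact ⟨_, ⟨coord p i, Algebra.subset_adjoin ⟨i, rfl⟩, rfl⟩, hi⟩

lemma exists_prod_coord_of_mem_closure {f : C(Cube p, ℝ)}
    (hf : f ∈ Submonoid.closure (Set.range (coord p))) :
    ∃ (d : ℕ) (σ : Fin d → Fin p), ⇑f = fun x : Cube p => ∏ k, (x : Fin p → ℝ) (σ k) := by
  induction hf using Submonoid.closure_induction with
  | mem _ h =>
    obtain ⟨i, rfl⟩ := h
    exact ⟨1, fun _ => i, by ext; simp [coord]⟩
  | one => exact ⟨0, Fin.elim0, by ext; simp⟩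
  | mul f g _ _ hf hg =>
    obtain ⟨d, σ, hσ⟩ := hf
    obtain ⟨e, τ, hτ⟩ := hg
    exact ⟨d + e, Fin.append σ τ, by ext; simp [hσ, hτ, Fin.prod_univ_add]⟩

lemma coe_mem_cflSpan_of_mem_adjoin {f : C(Cube p, ℝ)}
    (hf : f ∈ Algebra.adjoin ℝ (Set.range (coord p))) : ⇑f ∈ cflSpan p := by
  rw [← Subalgebra.mem_toSubmodule, Algebra.adjoin_eq_span] at hf
  refine (Submodule.span_le (p := (cflSpan p).comap (ContinuousMap.coeFnLinearMap ℝ))).2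
    (fun g hg => ?_) hf
  obtain ⟨d, σ, hσ⟩ := exists_prod_coord_of_mem_closure hg
  change ⇑g ∈ cflSpan p
  exact hσ ▸ cflSpan.prod_coord_mem σ

end Cube

lemma cflSpan.exists_near (p : ℕ) (G : C(Cube p, ℝ)) {ε : ℝ} (hε : 0 < ε) :
    ∃ ψ : C(Cube p, ℝ), ⇑ψ ∈ cflSpan p ∧ ∀ x, |G x - ψ x| < ε := by
  obtain ⟨⟨ψ, hψ⟩, hnear⟩ := ContinuousMap.exists_mem_subalgebra_near_continuous_of_separatesPoints
    _ Cube.adjoin_coord_separatesPoints G G.continuous ε hε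
  exact ⟨ψ, Cube.coe_mem_cflSpan_of_mem_adjoin hψ, fun x => by simpa [abs_sub_comm] using hnear x⟩

/-- Finite linear combinations of CFL continued fractions that are defined
(all denominators nonzero) and continuous on [0,1]^p are dense in
C([0,1]^p, ℝ) in the supremum norm. -/
theorem CFL_combinations_dense (p : ℕ) (G : C(Cube p, ℝ)) (ε : ℝ) (hε : 0 < ε) :
    ∃ (L : ℕ) (F : Fin L → CFLData p) (γ : Fin L → ℝ),
      (∀ x : Cube p, ∀ i, (F i).DenomOK x) ∧
      Continuous (fun x : Cube p => ∑ i, γ i * (F i).val x) ∧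
      ∀ x : Cube p, |G x - ∑ i, γ i * (F i).val x| < ε := by
  obtain ⟨ψ, hψ, hnear⟩ := cflSpan.exists_near p G hε
  obtain ⟨L, F, γ, hOK, hψ_eq⟩ := cflSpan.exists_sum_eq hψ
  exact ⟨L, F, γ, hOK, (continuous_congr hψ_eq).1 ψ.continuous, fun x => hψ_eq x ▸ hnear x⟩
end
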